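/- arXiv:1408.6333 — 2 statements merged into one kernel-verified Lean document; each statement's English description precedes it below -/
import Mathlib

section
/- With the notation of the previous statement (design matrix $X_n$ built from distinct reals $x_1, \dots, x_n$, $v_n = (d+1)\sum_j x_j^2$, $\widetilde{S}_n^2 = \frac{1}{n}\sum_j (x_j - \bar{x}_n)^2 > 0$), the smallest eigenvalue $\lambda_2^{(n)} = \frac{n+v_n}{2} - \sqrt{\frac{(n+v_n)^2}{4} - n^2(d+1)\widetilde{S}_n^2}$ of $X_n^\top X_n$ satisfies the lower bound $\lambda_2^{(n)} \ge \frac{n}{1/\widetilde{S}_n^2 + 1 + \bar{x}_n^2/\widetilde{S}_n^2}$. -/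
/-!
The smaller root of `λ² - Aλ + B` is `B` divided by the larger root, hence at least `B / A`.
Here `A = n + (d + 1) (n S² + n x̄²)` (using `∑ xⱼ² = n S² + n x̄²`) and `B = n² (d + 1) S²`,
and `B / A ≥ n S² / (1 + S² + x̄²)` because `d + 1 ≥ 1`. `S² > 0` since two of the `xⱼ` differ.
-/

open Finset

lemma div_le_half_sub_sqrt {A B : ℝ} (hA : 0 < A) (hB : 2 * B ≤ A ^ 2) :
    B / A ≤ A / 2 - √(A ^ 2 / 4 - B) := by
  have hroot : √(A ^ 2 / 4 - B) ≤ A / 2 - B / A := by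
    rw [Real.sqrt_le_iff]
    constructor
    · rw [sub_nonneg, div_le_div_iff₀ hA two_pos]
      nlinarith
    · have : (A / 2 - B / A) ^ 2 = A ^ 2 / 4 - B + (B / A) ^ 2 := by
        field_simp
        ring
      nlinarith [sq_nonneg (B / A)]
  linarith

lemma div_le_smaller_root {n c S m : ℝ} (hn : 0 < n) (hc : 1 ≤ c) (hS : 0 < S) :
    n / (1 / S + 1 + m ^ 2 / S) ≤
      (n + c * (n * S + n * m ^ 2)) / 2 -
        √((n + c * (n * S + n * m ^ 2)) ^ 2 / 4 - n ^ 2 * c * S) := by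
  have hA : 0 < n + c * (n * S + n * m ^ 2) := by positivity
  refine le_trans ?_ (div_le_half_sub_sqrt hA ?_)
  · rw [div_le_div_iff₀ (by positivity) hA]
    field_simp
    nlinarith [mul_nonneg (mul_nonneg hn.le hn.le) (sq_nonneg m), mul_pos hn hS]
  · nlinarith [sq_nonneg (n - c * (n * S + n * m ^ 2)), mul_pos hn hS, sq_nonneg m,
      mul_nonneg (mul_nonneg hn.le hn.le) (sq_nonneg m)]

section

variable {ι : Type*} [Fintype ι]

lemma sum_sq_eq_sum_sq_sub_mean_add (x : ι → ℝ) :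
    ∑ j, x j ^ 2 = ∑ j, (x j - (∑ i, x i) / Fintype.card ι) ^ 2 +
      Fintype.card ι * ((∑ i, x i) / Fintype.card ι) ^ 2 := by
  set N : ℝ := (Fintype.card ι : ℝ)
  set m := (∑ i, x i) / N
  have hm : m * ∑ i, x i = N * m ^ 2 := by
    rcases eq_or_ne N 0 with hN | hN
    · simp [m, hN]
    · simp only [m]; field_simp
  simp only [sub_sq, sum_add_distrib, sum_sub_distrib, ← sum_mul, ← mul_sum, sum_const,
    card_univ, nsmul_eq_mul]
  linear_combination 2 * hm

lemma sum_sq_sub_pos_of_ne {x : ι → ℝ} {i j : ι} (h : x i ≠ x j) (c : ℝ) :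
    0 < ∑ k, (x k - c) ^ 2 := by
  obtain ⟨k, hk⟩ : ∃ k, x k ≠ c := by
    by_contra! hc
    exact h ((hc i).trans (hc j).symm)
  exact sum_pos' (fun _ _ => sq_nonneg _) ⟨k, mem_univ k, by positivity [sub_ne_zero.mpr hk]⟩

end

theorem stmt_3 (d n : ℕ) (hn : 2 ≤ n) (x : Fin n → ℝ)
    (hx : Function.Injective x) :
    (0 : ℝ) < (∑ j, (x j - (∑ i, x i) / n) ^ 2) / n ∧
    ∀ v xbar S2 : ℝ,
      v = (d + 1 : ℝ) * ∑ j, x j ^ 2 →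
      xbar = (∑ j, x j) / n →
      S2 = (∑ j, (x j - (∑ i, x i) / n) ^ 2) / n →
      (n : ℝ) / (1 / S2 + 1 + xbar ^ 2 / S2) ≤
        ((n : ℝ) + v) / 2 -
          Real.sqrt (((n : ℝ) + v) ^ 2 / 4 - (n : ℝ) ^ 2 * (d + 1 : ℝ) * S2) := by
  have hn0 : (0 : ℝ) < n := by positivity
  have hS2 : (0 : ℝ) < (∑ j, (x j - (∑ i, x i) / n) ^ 2) / n := by
    have hx01 : x ⟨0, by omega⟩ ≠ x ⟨1, by omega⟩ := hx.ne (by simp)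
    exact div_pos (sum_sq_sub_pos_of_ne hx01 _) hn0
  refine ⟨hS2, ?_⟩
  intro v xbar S2 hv hxbar hS
  have hsum := sum_sq_eq_sum_sq_sub_mean_add x
  rw [Fintype.card_fin] at hsum
  have hv' : v = (d + 1 : ℝ) * (n * S2 + n * xbar ^ 2) := by
    rw [hv, hsum, hxbar, hS, mul_div_cancel₀ _ hn0.ne']
  rw [hv']
  exact div_le_smaller_root hn0 (le_add_of_nonneg_left d.cast_nonneg) (hS ▸ hS2)
end

section
/- Let $K_1, \dots, K_m$ be compact convex subsets of $\mathbb{R}^d$ whose union $K = K_1 \cup \dots \cup K_m$ is convex. Then, for each $k = 0, \dots, d$, the intrinsic volume $C_k$ satisfies the inclusion–exclusion formula $C_k(K) = \sum_{\emptyset \ne I \subseteq \{1, \dots, m\}} (-1)^{|I|-1} C_k\big(\bigcap_{i\in I} K_i\big)$, where all intersections $\bigcap_{i\in I}K_i$ are compact convex (possibly empty, with $C_k(\emptyset) = 0$). -/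
/-!
On compact convex sets the Euler characteristic is `1` on nonempty sets and `0` on `∅`, and by
Hadwiger's slicing argument it respects every linear relation `∑ αⱼ 1_{Kⱼ} = 0` between indicator
functions of compact convex sets: restricting to the level sets of a linear functional lowers the
dimension, and in dimension one a compact interval is detected by the jump of its indicator at its
right endpoint. Since `x ∈ K_ε` iff `K ∩ B(x, ε) ≠ ∅`, such a relation passes to the parallel
bodies `K_ε`, and integrating turns it into the same relation between their volumes. By the Steiner
formula these volumes are polynomials in `ε` with coefficients `κ_{d-k} C_k`, so the relation holds
for each `C_k`. Inclusion–exclusion for indicator functions supplies the relation between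
`⋃ Kᵢ` and the intersections `⋂_{i ∈ I} Kᵢ`.
-/

open MeasureTheory Metric Finset

/-- `κ j` is the volume of the unit ball in `ℝ^j`. -/
noncomputable def unitBallVol (j : ℕ) : ℝ :=
  (volume (Metric.ball (0 : EuclideanSpace ℝ (Fin j)) 1)).toReal

section

open scoped Classical
open Filter Topology

def IsIndicatorRelation {ι E : Type*} (s : Finset ι) (α : ι → ℝ) (K : ι → Set E) : Prop :=
  ∀ x, ∑ j ∈ s with x ∈ K j, α j = 0

variable {ι E : Type*} {s : Finset ι} {α : ι → ℝ}

lemma Set.OrdConnected.eventually_add_mem_iff {A : Set ℝ} (hA : A.OrdConnected)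
    (hAc : IsClosed A) (t : ℝ) :
    ∀ᶠ δ in 𝓝[>] 0, t + δ ∈ A ↔ t ∈ A ∧ ¬IsGreatest A t := by
  by_cases hg : IsGreatest A t
  · filter_upwards [self_mem_nhdsWithin] with δ (hδ : 0 < δ)
    simp only [hg, not_true_eq_false, and_false, iff_false]
    exact fun h => (hg.2 h).not_gt (by linarith)
  by_cases ht : t ∈ A
  · obtain ⟨y, hy, hty⟩ : ∃ y ∈ A, t < y := by
      simpa [IsGreatest, upperBounds, ht] using hg
    filter_upwards [Ioo_mem_nhdsGT (sub_pos.2 hty)] with δ hδ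
    simp only [ht, hg, not_false_eq_true, and_self, iff_true]
    exact hA.out ht hy ⟨by linarith [hδ.1], by linarith [hδ.2]⟩
  · have : Tendsto (t + ·) (𝓝[>] 0) (𝓝 t) := by
      simpa using ((continuous_const_add t).tendsto 0).mono_left nhdsWithin_le_nhds
    filter_upwards [this (hAc.isOpen_compl.mem_nhds ht)] with δ hδ
    simp_all

lemma IsIndicatorRelation.sum_nonempty_eq_zero_of_ordConnected {A : ι → Set ℝ}
    (h : IsIndicatorRelation s α A) (hc : ∀ j ∈ s, IsCompact (A j))
    (hA : ∀ j ∈ s, (A j).OrdConnected) :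
    ∑ j ∈ s with (A j).Nonempty, α j = 0 := by
  -- Comparing the relation at `t` and just to the right of `t` isolates the sets ending at `t`.
  have hmax : ∀ t, ∑ j ∈ s with IsGreatest (A j) t, α j = 0 := by
    intro t
    obtain ⟨δ, hδ⟩ := ((eventually_all_finset s).2 fun j hj =>
      (hA j hj).eventually_add_mem_iff (hc j hj).isClosed t).exists
    have hjump : ∑ j ∈ s with IsGreatest (A j) t, α j =
        ∑ j ∈ s with t ∈ A j, α j - ∑ j ∈ s with t + δ ∈ A j, α j := by
      simp only [sum_filter, ← sum_sub_distrib]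
      refine sum_congr rfl fun j hj => ?_
      rw [hδ j hj]
      by_cases hG : IsGreatest (A j) t
      · simp [hG, hG.1]
      · simp [hG]
    rw [hjump, h, h, sub_zero]
  rw [← sum_fiberwise_of_maps_to (fun j hj => mem_image_of_mem (fun j => sSup (A j)) hj)]
  refine sum_eq_zero fun t _ => ?_
  rw [filter_filter, ← hmax t]
  refine sum_congr (filter_congr fun j hj => ?_) fun _ _ => rfl
  exact ⟨fun ⟨hne, heq⟩ => heq ▸ (hc j hj).isGreatest_sSup hne,
    fun hG => ⟨⟨t, hG.1⟩, hG.csSup_eq⟩⟩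

lemma IsIndicatorRelation.inter {K : ι → Set E} (h : IsIndicatorRelation s α K) (B : Set E) :
    IsIndicatorRelation s α (fun j => K j ∩ B) := by
  intro x
  by_cases hx : x ∈ B
  · simpa [hx] using h x
  · simp [hx]

lemma IsIndicatorRelation.sum_nonempty_eq_zero_of_separates [TopologicalSpace E] [AddCommGroup E]
    [Module ℝ E] {K : ι → Set E} {S : Set E} (F : Finset (E →L[ℝ] ℝ))
    (hF : ∀ x ∈ S, ∀ y ∈ S, (∀ f ∈ F, f x = f y) → x = y) (hKS : ∀ j ∈ s, K j ⊆ S)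
    (h : IsIndicatorRelation s α K) (hc : ∀ j ∈ s, IsCompact (K j))
    (hK : ∀ j ∈ s, Convex ℝ (K j)) :
    ∑ j ∈ s with (K j).Nonempty, α j = 0 := by
  induction F using Finset.induction_on generalizing K S with
  | empty =>
    by_cases hne : ∃ j ∈ s, (K j).Nonempty
    · obtain ⟨j₀, hj₀, x, hx⟩ := hne
      rw [← h x]
      refine sum_congr (filter_congr fun j hj => ⟨fun ⟨y, hy⟩ => ?_, fun hxj => ⟨x, hxj⟩⟩)
        fun _ _ => rfl
      rwa [hF x (hKS j₀ hj₀ hx) y (hKS j hj hy) (by simp)]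
    · rw [filter_false_of_mem fun j hj hKj => hne ⟨j, hj, hKj⟩, sum_empty]
  | insert f F _ ih =>
    -- Slicing by the level sets of `f` reduces to a relation between the intervals `f '' K j`.
    have hslice : IsIndicatorRelation s α (fun j => f '' K j) := by
      intro t
      have := ih (K := fun j => K j ∩ f ⁻¹' {t}) (S := S ∩ f ⁻¹' {t})
        (fun x hx y hy hxy =>
          hF x hx.1 y hy.1 ((forall_mem_insert _ _ _).2 ⟨hx.2.trans hy.2.symm, hxy⟩))
        (fun j hj => Set.inter_subset_inter_left _ (hKS j hj)) (h.inter _)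
        (fun j hj => (hc j hj).inter_right (isClosed_singleton.preimage f.continuous))
        (fun j hj => (hK j hj).inter (convex_hyperplane f.isLinear t))
      simpa [Set.Nonempty] using this
    simpa using hslice.sum_nonempty_eq_zero_of_ordConnected
      (fun j hj => (hc j hj).image f.continuous)
      (fun j hj => convex_iff_ordConnected.1 ((hK j hj).linear_image f.toLinearMap))

lemma IsIndicatorRelation.sum_nonempty_eq_zero [NormedAddCommGroup E] [NormedSpace ℝ E]
    [FiniteDimensional ℝ E] {K : ι → Set E} (h : IsIndicatorRelation s α K)
    (hc : ∀ j ∈ s, IsCompact (K j)) (hK : ∀ j ∈ s, Convex ℝ (K j)) :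
    ∑ j ∈ s with (K j).Nonempty, α j = 0 := by
  set b := Module.finBasis ℝ E
  refine h.sum_nonempty_eq_zero_of_separates (S := Set.univ)
    (univ.image fun i => LinearMap.toContinuousLinearMap (b.coord i))
    (fun x _ y _ hxy => b.ext_elem fun i => ?_) (fun _ _ => Set.subset_univ _) hc hK
  simpa using hxy _ (mem_image_of_mem _ (mem_univ i))

lemma IsCompact.mem_cthickening_iff_inter_closedBall_nonempty {X : Type*} [PseudoMetricSpace X]
    {A : Set X} (hA : IsCompact A) {ε : ℝ} (hε : 0 ≤ ε) {x : X} :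
    x ∈ cthickening ε A ↔ (A ∩ closedBall x ε).Nonempty := by
  simp [hA.cthickening_eq_biUnion_closedBall hε, Set.Nonempty, dist_comm]

lemma IsIndicatorRelation.cthickening [NormedAddCommGroup E] [NormedSpace ℝ E]
    [FiniteDimensional ℝ E] {K : ι → Set E} (h : IsIndicatorRelation s α K)
    (hc : ∀ j ∈ s, IsCompact (K j)) (hK : ∀ j ∈ s, Convex ℝ (K j)) {ε : ℝ} (hε : 0 ≤ ε) :
    IsIndicatorRelation s α (fun j => cthickening ε (K j)) := by
  intro x
  rw [← (h.inter (closedBall x ε)).sum_nonempty_eq_zero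
    (fun j hj => (hc j hj).inter_right isClosed_closedBall)
    (fun j hj => (hK j hj).inter (convex_closedBall x ε))]
  exact sum_congr (filter_congr fun j hj =>
    (hc j hj).mem_cthickening_iff_inter_closedBall_nonempty hε) fun _ _ => rfl

lemma IsIndicatorRelation.sum_mul_measureReal_eq_zero [MeasurableSpace E] (μ : Measure E)
    {A : ι → Set E} (h : IsIndicatorRelation s α A) (hm : ∀ j ∈ s, MeasurableSet (A j))
    (hfin : ∀ j ∈ s, μ (A j) ≠ ⊤) :
    ∑ j ∈ s, α j * μ.real (A j) = 0 := by
  have hpt : ∀ x, ∑ j ∈ s, (A j).indicator (fun _ => α j) x = 0 := fun x => by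
    simpa only [Set.indicator_apply, sum_filter] using h x
  calc ∑ j ∈ s, α j * μ.real (A j) = ∫ x, ∑ j ∈ s, (A j).indicator (fun _ => α j) x ∂μ := by
        rw [integral_finsetSum s fun j hj =>
          (integrableOn_const (hfin j hj)).integrable_indicator (hm j hj)]
        exact sum_congr rfl fun j hj => by
          rw [integral_indicator_const _ (hm j hj), smul_eq_mul, mul_comm]
    _ = 0 := by simp [hpt]

lemma eq_zero_of_sum_mul_pow_eq_zero_of_nonneg {n : ℕ} {a : ℕ → ℝ}
    (h : ∀ x, 0 ≤ x → ∑ i ∈ range n, a i * x ^ i = 0) {i : ℕ} (hi : i < n) : a i = 0 := by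
  set p : Polynomial ℝ := ∑ i ∈ range n, Polynomial.C (a i) * Polynomial.X ^ i
  have hp : p = 0 := p.eq_zero_of_infinite_isRoot <| (Set.Ici_infinite 0).mono fun x hx => by
    simpa [p, Polynomial.eval_finsetSum] using h x hx
  simpa [p, Polynomial.finsetSum_coeff, Polynomial.coeff_C_mul_X_pow, hi] using
    congrArg (·.coeff i) hp

lemma unitBallVol_pos (j : ℕ) : 0 < unitBallVol j :=
  ENNReal.toReal_pos (measure_ball_pos volume _ one_pos).ne' measure_ball_lt_top.ne

lemma IsIndicatorRelation.sum_mul_eq_zero_of_steiner {d : ℕ}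
    {K : ι → Set (EuclideanSpace ℝ (Fin d))}
    (C : ℕ → Set (EuclideanSpace ℝ (Fin d)) → ℝ) (hCempty : ∀ k, C k ∅ = 0)
    (hSteiner : ∀ A : Set (EuclideanSpace ℝ (Fin d)), IsCompact A → Convex ℝ A →
      A.Nonempty → ∀ ε : ℝ, 0 ≤ ε →
        (volume (Metric.cthickening ε A)).toReal =
          ∑ k ∈ Finset.range (d + 1), ε ^ (d - k) * unitBallVol (d - k) * C k A)
    (h : IsIndicatorRelation s α K) (hc : ∀ j ∈ s, IsCompact (K j))
    (hK : ∀ j ∈ s, Convex ℝ (K j)) {k : ℕ} (hk : k ≤ d) :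
    ∑ j ∈ s, α j * C k (K j) = 0 := by
  set c : ℕ → ℝ := fun k => ∑ j ∈ s, α j * C k (K j)
  have hvol : ∀ ε, 0 ≤ ε → ∀ j ∈ s, volume.real (Metric.cthickening ε (K j)) =
      ∑ k ∈ range (d + 1), ε ^ (d - k) * unitBallVol (d - k) * C k (K j) := by
    intro ε hε j hj
    rcases (K j).eq_empty_or_nonempty with hempty | hne
    · simp [hempty, hCempty]
    · exact hSteiner _ (hc j hj) (hK j hj) hne ε hε
  have hpoly : ∀ ε, 0 ≤ ε →
      ∑ k ∈ range (d + 1), ε ^ (d - k) * unitBallVol (d - k) * c k = 0 := by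
    intro ε hε
    calc ∑ k ∈ range (d + 1), ε ^ (d - k) * unitBallVol (d - k) * c k
        = ∑ j ∈ s, α j * volume.real (Metric.cthickening ε (K j)) := by
          simp only [c, mul_sum]
          rw [sum_comm]
          exact sum_congr rfl fun j hj => by
            rw [hvol ε hε j hj, mul_sum]
            exact sum_congr rfl fun _ _ => by ring
      _ = 0 := (h.cthickening hc hK hε).sum_mul_measureReal_eq_zero volume
          (fun _ _ => isClosed_cthickening.measurableSet)
          (fun j hj => ((hc j hj).isBounded.cthickening.measure_lt_top).ne)
  have hcoeff := eq_zero_of_sum_mul_pow_eq_zero_of_nonneg (n := d + 1)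
    (a := fun i => unitBallVol i * c (d - i)) (fun x hx => by
      rw [← hpoly x hx, ← sum_range_reflect]
      refine sum_congr rfl fun i hi => ?_
      rw [mem_range] at hi
      simp only [Nat.add_sub_cancel, Nat.sub_sub_self (by omega : i ≤ d)]
      ring) (i := d - k) (by omega)
  simpa [Nat.sub_sub_self hk, (unitBallVol_pos _).ne'] using hcoeff

lemma isIndicatorRelation_inclusion_exclusion [Fintype ι] (K : ι → Set E) :
    IsIndicatorRelation univ (fun I : Finset ι => (-1 : ℝ) ^ #I)
      (fun I => (⋃ i, K i) ∩ ⋂ i ∈ I, K i) := by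
  intro x
  by_cases hx : x ∈ ⋃ i, K i
  · obtain ⟨i, hi⟩ := Set.mem_iUnion.1 hx
    calc _ = ∑ I ∈ (univ.filter (x ∈ K ·)).powerset, (-1 : ℝ) ^ #I :=
          sum_congr (by ext I; simp [hx, subset_iff]) fun _ _ => rfl
      _ = 0 := by exact_mod_cast sum_powerset_neg_one_pow_card_of_nonempty ⟨i, by simpa using hi⟩
  · simp [hx]

end

lemma sum_neg_one_pow_card_mul_iUnion_inter {ι E : Type*} [Fintype ι] (K : ι → Set E)
    (g : Set E → ℝ) :
    ∑ I : Finset ι, (-1 : ℝ) ^ #I * g ((⋃ i, K i) ∩ ⋂ i ∈ I, K i) =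
      g (⋃ i, K i) - ∑ I ∈ univ.powerset.filter (fun I : Finset ι => I.Nonempty),
        (-1 : ℝ) ^ (#I - 1) * g (⋂ i ∈ I, K i) := by
  have hempty : univ.filter (fun I : Finset ι => ¬I.Nonempty) = {∅} := by
    ext I
    simp [not_nonempty_iff_eq_empty]
  have hnonempty : ∀ I ∈ univ.filter (fun I : Finset ι => I.Nonempty),
      (-1 : ℝ) ^ #I * g ((⋃ i, K i) ∩ ⋂ i ∈ I, K i) = -((-1) ^ (#I - 1) * g (⋂ i ∈ I, K i)) := by
    intro I hI
    obtain ⟨i, hi⟩ := (mem_filter.1 hI).2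
    obtain ⟨n, hn⟩ := Nat.exists_eq_add_one.2 (card_pos.2 ⟨i, hi⟩)
    rw [Set.inter_eq_right.2 ((Set.iInter₂_subset i hi).trans (Set.subset_iUnion K i)),
      hn, pow_succ, Nat.add_sub_cancel]
    ring
  rw [powerset_univ, ← sum_filter_add_sum_filter_not univ (fun I : Finset ι => I.Nonempty),
    hempty, sum_singleton, sum_congr rfl hnonempty, sum_neg_distrib]
  simp
  ring

theorem stmt_16_general (d m : ℕ)
    (K : Fin m → Set (EuclideanSpace ℝ (Fin d)))
    (hKc : ∀ i, IsCompact (K i)) (hKconv : ∀ i, Convex ℝ (K i))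
    (hU : Convex ℝ (⋃ i, K i))
    (C : ℕ → Set (EuclideanSpace ℝ (Fin d)) → ℝ)
    (hCempty : ∀ k, C k ∅ = 0)
    (hSteiner : ∀ A : Set (EuclideanSpace ℝ (Fin d)), IsCompact A → Convex ℝ A →
      A.Nonempty → ∀ ε : ℝ, 0 ≤ ε →
        (volume (Metric.cthickening ε A)).toReal =
          ∑ k ∈ Finset.range (d + 1), ε ^ (d - k) * unitBallVol (d - k) * C k A) :
    ∀ k ≤ d, C k (⋃ i, K i) =
      ∑ I ∈ Finset.univ.powerset.filter (fun I : Finset (Fin m) => I.Nonempty),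
        (-1 : ℝ) ^ (I.card - 1) * C k (⋂ i ∈ I, K i) := by
  intro k hk
  have hrel := (isIndicatorRelation_inclusion_exclusion K).sum_mul_eq_zero_of_steiner C hCempty
    hSteiner (fun I _ => (isCompact_iUnion hKc).inter_right
      (isClosed_biInter fun i _ => (hKc i).isClosed))
    (fun I _ => hU.inter (convex_iInter₂ fun i _ => hKconv i)) hk
  rw [sum_neg_one_pow_card_mul_iUnion_inter K (C k)] at hrel
  linarith

theorem stmt_16 (d m : ℕ) (hm : 0 < m)
    (K : Fin m → Set (EuclideanSpace ℝ (Fin d)))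
    (hKc : ∀ i, IsCompact (K i)) (hKconv : ∀ i, Convex ℝ (K i))
    (hU : Convex ℝ (⋃ i, K i))
    (C : ℕ → Set (EuclideanSpace ℝ (Fin d)) → ℝ)
    (hCempty : ∀ k, C k ∅ = 0)
    (hSteiner : ∀ A : Set (EuclideanSpace ℝ (Fin d)), IsCompact A → Convex ℝ A →
      A.Nonempty → ∀ ε : ℝ, 0 ≤ ε →
        (volume (Metric.cthickening ε A)).toReal =
          ∑ k ∈ Finset.range (d + 1), ε ^ (d - k) * unitBallVol (d - k) * C k A) :
    ∀ k ≤ d, C k (⋃ i, K i) =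
      ∑ I ∈ Finset.univ.powerset.filter (fun I : Finset (Fin m) => I.Nonempty),
        (-1 : ℝ) ^ (I.card - 1) * C k (⋂ i ∈ I, K i) :=
  stmt_16_general d m K hKc hKconv hU C hCempty hSteiner
end
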